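/- arXiv:math/0312337 — 2 statements merged into one kernel-verified Lean document; each statement's English description precedes it below -/
import Mathlib

section
/- With H, λ, Λ, ν as above, the element S(Λ) is a two-sided unit for the product x * z = λ(x S(z₍₂₎)) z₍₁₎ on L(H): for all z ∈ L(H), z * S(Λ) = z = S(Λ) * z. -/
/- STATEMENT 4: With H, λ, Λ, ν as above, S(Λ) is a two-sided unit for the product
x ⋆ z = λ(x S(z₍₂₎)) z₍₁₎ on L(H): for all z ∈ L(H), z ⋆ S(Λ) = z = S(Λ) ⋆ z. -/

open TensorProduct Coalgebra HopfAlgebra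

/-- The right action `x ↼ ν = ν(x₍₁₎) x₍₂₎`. -/
noncomputable def actnu {k H : Type*} [Field k] [Ring H] [HopfAlgebra k H]
    (ν : H →ₐ[k] k) : H →ₗ[k] H :=
  (TensorProduct.lid k H).toLinearMap ∘ₗ (TensorProduct.map ν.toLinearMap LinearMap.id)
    ∘ₗ (Coalgebra.comul : H →ₗ[k] H ⊗[k] H)

/-- The product `x ⋆ z = λ(x S(z₍₂₎)) z₍₁₎` on `L(H)`. -/
noncomputable def hstar {k H : Type*} [Field k] [Ring H] [HopfAlgebra k H]
    (lam : H →ₗ[k] k) (x z : H) : H :=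
  (TensorProduct.rid k H)
    ((TensorProduct.map LinearMap.id
        (lam ∘ₗ LinearMap.mulLeft k x ∘ₗ HopfAlgebra.antipode (R := k)))
      (Coalgebra.comul (R := k) z))

/-!
The right integral `λ` yields the Frobenius identity `λ(a₁ b) a₂ = λ(a b₁) S(b₂)`. Taking
`b = Λ`, and applying `ν` with `a = Λ`, gives `S(Λ) = ν(Λ₂) Λ₁` and `λ(S(Λ) u) = ε(u)`; the
latter gives `S(Λ) ⋆ z = z` at once. For `z ⋆ S(Λ)`, the condition `z ∈ L(H)` together with
`Δ(S x) = S x₂ ⊗ S x₁` turns `λ(z S(x))` into `λ(S(x₁) z) ν(S x₂)`; this factor `ν ∘ S` cancels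
the `ν` of `S(Λ) = ν(Λ₂) Λ₁`, being its convolution inverse, and what is left is
`λ(S(Λ₂) z) Λ₁ = λ(S(Λ) z₁) z₂ = z`. All coassociativity bookkeeping is absorbed by
associativity of the convolution product on `H →ₗ H`.
-/

open WithConv

namespace HopfAlgebra

variable {R A : Type*} [CommSemiring R] [Semiring A] [HopfAlgebra R A]

lemma algHom_comp_antipode_convMul {B : Type*} [Semiring B] [Algebra R B] (h : A →ₐ[R] B) :
    toConv (h.toLinearMap ∘ₗ antipode R) * toConv h.toLinearMap = 1 :=
  calc toConv (h.toLinearMap ∘ₗ antipode R) * toConv h.toLinearMap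
      = toConv (h.toLinearMap ∘ₗ
          (toConv (antipode R) * toConv (LinearMap.id : A →ₗ[R] A)).ofConv) := by
        rw [LinearMap.algHom_comp_convMul_distrib]; rfl
    _ = 1 := by rw [LinearMap.antipode_mul_id]; ext; simp

/- `Δ ∘ S` is a right convolution inverse of `Δ`, and `(S ⊗ S) ∘ τ ∘ Δ = (1 ⊗ S) * (S ⊗ 1)`
is a left one. -/
open Algebra.TensorProduct in
theorem comul_comp_antipode :
    comul ∘ₗ antipode R =
      map (antipode R) (antipode R) ∘ₗ (TensorProduct.comm R A A).toLinearMap ∘ₗ comul := by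
  let iL : A →ₐ[R] A ⊗[R] A := includeLeft
  let iR : A →ₐ[R] A ⊗[R] A := includeRight
  set G : WithConv (A →ₗ[R] A ⊗[R] A) :=
    toConv (map (antipode R) (antipode R) ∘ₗ (TensorProduct.comm R A A).toLinearMap ∘ₗ comul)
  have hcomul : toConv comul = toConv iL.toLinearMap * toConv iR.toLinearMap := by
    ext a; simp [iL, iR, (ℛ R a).convMul_apply, ← (ℛ R a).eq]
  have hG : G = toConv (iR.toLinearMap ∘ₗ antipode R) * toConv (iL.toLinearMap ∘ₗ antipode R) := by
    ext a; simp [G, iL, iR, (ℛ R a).convMul_apply, ← (ℛ R a).eq]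
  have hinv : G * toConv comul = 1 := by
    rw [hG, hcomul, mul_assoc, ← mul_assoc (toConv (iL.toLinearMap ∘ₗ _)),
      algHom_comp_antipode_convMul, one_mul, algHom_comp_antipode_convMul]
  apply toConv_injective
  calc toConv (comul ∘ₗ antipode R) = G * toConv comul * toConv (comul ∘ₗ antipode R) := by
        rw [hinv, one_mul]
    _ = G := by rw [mul_assoc, LinearMap.comul_right_inv, mul_one]

end HopfAlgebra

@[simps]
protected noncomputable def Coalgebra.Repr.antipode {R A : Type*} [CommSemiring R] [Semiring A]
    [HopfAlgebra R A] {a : A} {ι : Type*} (r : Repr R a ι) : Repr R (antipode R a) ι where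
  index := r.index
  left i := antipode R (r.right i)
  right i := antipode R (r.left i)
  eq := by rw [← LinearMap.comp_apply, comul_comp_antipode]; simp [← r.eq]

lemma Coalgebra.Repr.convMul_algebraMap_comp_apply {R A C : Type*} [CommSemiring R] [Semiring A]
    [Algebra R A] [AddCommMonoid C] [Module R C] [Coalgebra R C] {c : C} {ι : Type*}
    (r : Repr R c ι) (F : WithConv (C →ₗ[R] A)) (φ : C →ₗ[R] R) :
    (F * toConv (Algebra.linearMap R A ∘ₗ φ)) c = F (∑ i ∈ r.index, φ (r.right i) • r.left i) := by
  rw [r.convMul_apply]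
  simp [map_sum, Algebra.smul_def, Algebra.commutes]

section Integrals
variable {k H : Type*} [CommSemiring k] [Semiring H] [HopfAlgebra k H]

/-- In Sweedler notation: `λ(x₁) x₂ = λ(x) 1`. -/
def IsRightIntegral (lam : H →ₗ[k] k) : Prop :=
  ∀ x : H, TensorProduct.lid k H (lam.rTensor H (comul x)) = lam x • 1

namespace IsRightIntegral
variable {lam : H →ₗ[k] k}

/- A representation indexed by `ULift (Fin n)` exists in every universe. -/
lemma of_forall_repr (h : ∀ (x : H) {ι : Type*} (r : Repr k x ι),
      ∑ i ∈ r.index, lam (r.left i) • r.right i = lam x • 1) :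
    IsRightIntegral lam := by
  intro x
  obtain ⟨n, m, m', hx⟩ := TensorProduct.exists_sum_tmul_eq (comul (R := k) x)
  let r : Repr k x (ULift (Fin n)) :=
    ⟨Finset.univ, fun i => m i.down, fun i => m' i.down,
      by rw [hx]; exact Equiv.ulift.sum_comp fun j => m j ⊗ₜ m' j⟩
  rw [← h x r, ← r.eq]
  simp [map_sum]

variable (hlam : IsRightIntegral lam)
include hlam

lemma sum_smul {x : H} {ι : Type*} (r : Repr k x ι) :
    ∑ i ∈ r.index, lam (r.left i) • r.right i = lam x • 1 := by
  rw [← hlam x, ← r.eq]; simp [map_sum]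

/- With `g b = λ(a₁ b) a₂`, the integral property of `a b` reads `g * id = λ(a ·) 1`,
hence `g = λ(a ·) 1 * S`. -/
lemma sum_mul_smul {a b : H} {ι κ : Type*} (r : Repr k a ι) (s : Repr k b κ) :
    ∑ i ∈ r.index, lam (r.left i * b) • r.right i =
      ∑ j ∈ s.index, lam (a * s.left j) • antipode k (s.right j) := by
  let g : H →ₗ[k] H :=
    ∑ i ∈ r.index, (lam ∘ₗ LinearMap.mulLeft k (r.left i)).smulRight (r.right i)
  let h : H →ₗ[k] H := Algebra.linearMap k H ∘ₗ lam ∘ₗ LinearMap.mulLeft k a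
  have hg : toConv g * toConv LinearMap.id = toConv h := by
    ext c
    rw [(ℛ k c).convMul_apply]
    have := hlam.sum_smul (r.mul (ℛ k c))
    simp [g, h, Finset.sum_mul, Finset.sum_product] at this ⊢
    rw [Finset.sum_comm, this, Algebra.algebraMap_eq_smul_one]
  have := congr($(show toConv g = toConv h * toConv (antipode k) by
    rw [← hg, mul_assoc, LinearMap.id_mul_antipode, mul_one]) b)
  rw [s.convMul_apply] at this
  simpa [g, h, Algebra.smul_def] using this

/- With `φ a = λ(S(a) y₁) y₂`, the integral property of `S(a) y` reads `S * φ = λ(S(·) y) 1`,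
hence `φ = id * (S * φ)`. -/
lemma sum_antipode_mul_smul {a y : H} {ι κ : Type*} (r : Repr k a ι) (s : Repr k y κ) :
    ∑ i ∈ r.index, lam (antipode k (r.right i) * y) • r.left i =
      ∑ j ∈ s.index, lam (antipode k a * s.left j) • s.right j := by
  let φ : H →ₗ[k] H :=
    ∑ j ∈ s.index, (lam ∘ₗ LinearMap.mulRight k (s.left j) ∘ₗ antipode k).smulRight (s.right j)
  let ψ : H →ₗ[k] H := Algebra.linearMap k H ∘ₗ lam ∘ₗ LinearMap.mulRight k y ∘ₗ antipode k
  have hφ : toConv (antipode k) * toConv φ = toConv ψ := by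
    ext c
    rw [(ℛ k c).convMul_apply]
    have := hlam.sum_smul ((ℛ k c).antipode.mul s)
    simp [φ, ψ, Finset.mul_sum, Finset.sum_product] at this ⊢
    rw [this, Algebra.algebraMap_eq_smul_one]
  have := congr($(show toConv φ = toConv LinearMap.id * toConv ψ by
    rw [← hφ, ← mul_assoc, LinearMap.id_mul_antipode, one_mul]) a)
  rw [r.convMul_apply] at this
  simpa [φ, ψ, Algebra.smul_def, Algebra.commutes] using this.symm

section LeftIntegral
variable {Λ : H} (hΛ : ∀ x : H, x * Λ = counit (R := k) x • Λ) (hpair : lam Λ = 1)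
  {ν : H →ₐ[k] k} (hν : ∀ x : H, Λ * x = ν x • Λ)
include hpair

include hΛ in
lemma sum_mul_smul_antipode_eq_self {ι : Type*} (rΛ : Repr k Λ ι) (a : H) :
    ∑ i ∈ rΛ.index, lam (a * rΛ.left i) • antipode k (rΛ.right i) = a := by
  rw [← hlam.sum_mul_smul (ℛ k a) rΛ]
  simp [hΛ, hpair, sum_counit_smul]

include hν in
lemma sum_distinguished_mul_lam_eq_counit {ι : Type*} (rΛ : Repr k Λ ι) (b : H) :
    ∑ i ∈ rΛ.index, ν (rΛ.right i) * lam (rΛ.left i * b) = counit b := by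
  have := congr(ν $(hlam.sum_mul_smul rΛ (ℛ k b)))
  simp only [map_sum, map_smul, smul_eq_mul, hν, hpair, mul_one] at this
  rw [Finset.sum_congr rfl fun i _ => mul_comm _ _, this]
  simp_rw [← map_mul, ← map_sum, sum_mul_antipode_eq_smul, map_smul, map_one, smul_eq_mul,
    mul_one]

include hΛ hν in
lemma antipode_eq_sum {ι : Type*} (rΛ : Repr k Λ ι) :
    antipode k Λ = ∑ i ∈ rΛ.index, ν (rΛ.right i) • rΛ.left i := by
  set P := ∑ i ∈ rΛ.index, ν (rΛ.right i) • rΛ.left i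
  have hP : ∀ b, lam (P * b) = counit b := fun b => by
    simpa [P, Finset.sum_mul, smul_mul_assoc] using
      hlam.sum_distinguished_mul_lam_eq_counit hpair hν rΛ b
  rw [← hlam.sum_mul_smul_antipode_eq_self hΛ hpair rΛ P]
  simp_rw [hP, ← map_smul, ← map_sum, sum_counit_smul]

include hΛ hν in
lemma lam_antipode_mul (u : H) : lam (antipode k Λ * u) = counit u := by
  rw [hlam.antipode_eq_sum hΛ hpair hν (ℛ k Λ)]
  simpa [Finset.sum_mul, smul_mul_assoc] using
    hlam.sum_distinguished_mul_lam_eq_counit hpair hν (ℛ k Λ) u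

end LeftIntegral
end IsRightIntegral
end Integrals

section HStar
variable {k H : Type*} [Field k] [Ring H] [HopfAlgebra k H]

lemma hstar_eq_convMul (lam : H →ₗ[k] k) (x c : H) :
    hstar lam x c = (toConv (LinearMap.id : H →ₗ[k] H) *
      toConv (Algebra.linearMap k H ∘ₗ lam ∘ₗ LinearMap.mulLeft k x ∘ₗ antipode k)) c := by
  rw [(ℛ k c).convMul_apply]
  simp [hstar, ← (ℛ k c).eq, Algebra.smul_def, Algebra.commutes]

lemma lam_mulLeft_antipode_eq_convMul {lam : H →ₗ[k] k} {ν : H →ₐ[k] k} {z : H}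
    (hz : ∀ w : H, actnu ν w * z = z * w) :
    toConv (Algebra.linearMap k H ∘ₗ lam ∘ₗ LinearMap.mulLeft k z ∘ₗ antipode k) =
      toConv (Algebra.linearMap k H ∘ₗ lam ∘ₗ LinearMap.mulRight k z ∘ₗ antipode k) *
        toConv (Algebra.linearMap k H ∘ₗ ν.toLinearMap ∘ₗ antipode k) := by
  ext c
  have hS : actnu ν (antipode k c) =
      ∑ i ∈ (ℛ k c).index, ν (antipode k ((ℛ k c).right i)) • antipode k ((ℛ k c).left i) := by
    simp [actnu, ← (ℛ k c).antipode.eq]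
  rw [(ℛ k c).convMul_apply]
  simp [← hz, hS, Finset.sum_mul]
  exact Finset.sum_congr rfl fun _ _ => Algebra.commutes _ _

variable {lam : H →ₗ[k] k} (hlam : IsRightIntegral lam) {Λ : H}
  (hΛ : ∀ x : H, x * Λ = counit (R := k) x • Λ) (hpair : lam Λ = 1)
  {ν : H →ₐ[k] k} (hν : ∀ x : H, Λ * x = ν x • Λ)
include hlam hΛ hpair hν

lemma antipode_integral_hstar (z : H) : hstar lam (antipode k Λ) z = z := by
  simp [hstar, ← (ℛ k z).eq, hlam.lam_antipode_mul hΛ hpair hν]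

lemma hstar_antipode_integral {z : H} (hz : ∀ w : H, actnu ν w * z = z * w) :
    hstar lam z (antipode k Λ) = z := by
  have hν_inv : toConv (Algebra.linearMap k H ∘ₗ ν.toLinearMap ∘ₗ antipode k) *
      toConv (Algebra.linearMap k H ∘ₗ ν.toLinearMap) = 1 :=
    algHom_comp_antipode_convMul ((Algebra.ofId k H).comp ν)
  calc hstar lam z (antipode k Λ)
      = (toConv (LinearMap.id : H →ₗ[k] H) *
          toConv (Algebra.linearMap k H ∘ₗ lam ∘ₗ LinearMap.mulLeft k z ∘ₗ antipode k) *
          toConv (Algebra.linearMap k H ∘ₗ ν.toLinearMap)) Λ := by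
        rw [hstar_eq_convMul, hlam.antipode_eq_sum hΛ hpair hν (ℛ k Λ),
          (ℛ k Λ).convMul_algebraMap_comp_apply]
        rfl
    _ = (toConv (LinearMap.id : H →ₗ[k] H) *
          toConv (Algebra.linearMap k H ∘ₗ lam ∘ₗ LinearMap.mulRight k z ∘ₗ antipode k)) Λ := by
        rw [lam_mulLeft_antipode_eq_convMul hz, mul_assoc, mul_assoc, hν_inv, mul_one]
    _ = ∑ i ∈ (ℛ k Λ).index, lam (antipode k ((ℛ k Λ).right i) * z) • (ℛ k Λ).left i := by
        rw [(ℛ k Λ).convMul_apply]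
        simp [Algebra.smul_def, Algebra.commutes]
    _ = z := by
        rw [hlam.sum_antipode_mul_smul (ℛ k Λ) (ℛ k z)]
        simp [hlam.lam_antipode_mul hΛ hpair hν, sum_counit_smul]

end HStar

theorem stmt4_general {k H : Type*} [Field k] [Ring H] [HopfAlgebra k H]
    (lam : H →ₗ[k] k)
    (hlam : ∀ (x : H) {ι : Type*} (r : Coalgebra.Repr k x ι),
      ∑ i ∈ r.index, lam (r.left i) • r.right i = lam x • (1 : H))
    (Λ : H)
    (hΛ : ∀ x : H, x * Λ = Coalgebra.counit (R := k) x • Λ)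
    (hpair : lam Λ = 1)
    (ν : H →ₐ[k] k) (hν : ∀ x : H, Λ * x = ν x • Λ) :
    ∀ z : H, (∀ w : H, actnu ν w * z = z * w) →
      hstar lam z (HopfAlgebra.antipode (R := k) Λ) = z ∧
      hstar lam (HopfAlgebra.antipode (R := k) Λ) z = z := by
  intro z hz
  have hlam' := IsRightIntegral.of_forall_repr hlam
  exact ⟨hstar_antipode_integral hlam' hΛ hpair hν hz,
    antipode_integral_hstar hlam' hΛ hpair hν z⟩

theorem stmt4 {k H : Type*} [Field k] [Ring H] [HopfAlgebra k H] [FiniteDimensional k H]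
    (lam : H →ₗ[k] k)
    (hlam : ∀ (x : H) {ι : Type*} (r : Coalgebra.Repr k x ι),
      ∑ i ∈ r.index, lam (r.left i) • r.right i = lam x • (1 : H))
    (Λ : H) (hΛ0 : Λ ≠ 0)
    (hΛ : ∀ x : H, x * Λ = Coalgebra.counit (R := k) x • Λ)
    (hpair : lam Λ = 1) (hpair' : lam (HopfAlgebra.antipode (R := k) Λ) = 1)
    (ν : H →ₐ[k] k) (hν : ∀ x : H, Λ * x = ν x • Λ) :
    ∀ z : H, (∀ w : H, actnu ν w * z = z * w) →
      hstar lam z (HopfAlgebra.antipode (R := k) Λ) = z ∧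
      hstar lam (HopfAlgebra.antipode (R := k) Λ) z = z :=
  stmt4_general lam hlam Λ hΛ hpair ν hν
end

section
/- Let H be a finite-dimensional unimodular ribbon Hopf algebra with right integral λ for H*, left integral Λ with λ(Λ)=λ(S(Λ))=1, and define I(H) as the set of z ∈ L(H) with T(z) − z annihilated by λ(·a) for all central a, and Σ λ(z x_{i(1)}) λ(z x_{i(2)} y_i) = Σ λ(z x_i) λ(z y_i) for all Σ x_i ⊗ y_i ∈ V₂(H). Then 1 ∈ I(H). Conversely, if 1 ∈ I(H) then H is unimodular. -/
/- STATEMENT 15: H a finite-dimensional ribbon Hopf algebra with right integral λ for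
H*, left integral Λ with λ(Λ) = λ(S(Λ)) = 1.  I(H) is the set of z ∈ L(H) with
T(z) − z ∈ N(H) and Σᵢ λ(z x_{i(1)}) λ(z x_{i(2)} y_i) = Σᵢ λ(z xᵢ) λ(z yᵢ) for all
Σᵢ xᵢ ⊗ yᵢ ∈ V₂(H).  Then H is unimodular iff 1 ∈ I(H).  (Here membership of 1 in
I(H) is spelled out, including 1 ∈ L(H).) -/

open TensorProduct Coalgebra HopfAlgebra

/-- `h_ν = (id ⊗ ν)(R)`. -/
noncomputable def hnu {k H : Type*} [Field k] [Ring H] [HopfAlgebra k H]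
    (ν : H →ₐ[k] k) (R : H ⊗[k] H) : H :=
  (TensorProduct.rid k H) ((TensorProduct.map LinearMap.id ν.toLinearMap) R)

/-- `T(z) = (S(z) ↼ ν) h_ν`. -/
noncomputable def Tmap {k H : Type*} [Field k] [Ring H] [HopfAlgebra k H]
    (ν : H →ₐ[k] k) (R : H ⊗[k] H) (z : H) : H :=
  actnu ν (HopfAlgebra.antipode (R := k) z) * hnu ν R

/-!
Everything is decided by the counit. Applying `ε` to `x ↼ ν = x` gives `ν = ε`, so `1 ∈ L(H)`
already forces unimodularity. Conversely, for `ν = ε` the action `↼ ν` is trivial, and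
`h_ε = (id ⊗ ε)(R) = 1` because `id ⊗ ε ⊗ id` turns `(id ⊗ Δ)(R) = R₁₃R₁₂` into
`R = R ((id ⊗ ε)(R) ⊗ 1)`; hence `T(1) = 1`. The handle-slide identity for `z = 1` follows by
applying `λ(· y)` to `λ(x₍₁₎)x₍₂₎ = λ(x)1`.
-/

universe w

section Repr

variable {k H : Type*} [CommSemiring k] [AddCommMonoid H] [Module k H] [CoalgebraStruct k H]
  {x : H} {ι : Type*}

/- The integral hypothesis quantifies over index types of a single universe; this reindexing
moves any representation into it. -/
noncomputable def Coalgebra.Repr.uliftFin (r : Repr k x ι) :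
    Repr k x (ULift.{w} (Fin r.index.card)) where
  index := Finset.univ
  left i := r.left (r.index.equivFin.symm i.down)
  right i := r.right (r.index.equivFin.symm i.down)
  eq := by
    rw [← r.eq, ← Finset.sum_coe_sort r.index]
    exact Fintype.sum_equiv (Equiv.ulift.trans r.index.equivFin.symm) _ _ fun _ => rfl

lemma sum_repr_smul_eq_lid_rTensor_comul (r : Repr k x ι) (f : H →ₗ[k] k) :
    ∑ i ∈ r.index, f (r.left i) • r.right i
      = TensorProduct.lid k H (f.rTensor H (comul (R := k) x)) := by
  simp [← r.eq, map_sum]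

end Repr

section RightIntegral

variable {k H : Type*} [CommSemiring k] [Semiring H] [Algebra k H] [CoalgebraStruct k H]
  {ι : Type*}

lemma lid_rTensor_comul_of_forall_repr (lam : H →ₗ[k] k)
    (hlam : ∀ (x : H) (ι : Type w) (r : Coalgebra.Repr k x ι),
      ∑ i ∈ r.index, lam (r.left i) • r.right i = lam x • (1 : H)) (x : H) :
    TensorProduct.lid k H (lam.rTensor H (comul (R := k) x)) = lam x • 1 := by
  rw [← sum_repr_smul_eq_lid_rTensor_comul (Coalgebra.Repr.arbitrary k x).uliftFin]
  exact hlam x _ _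

lemma sum_repr_lam_mul_lam (lam : H →ₗ[k] k)
    (hlam : ∀ x : H, TensorProduct.lid k H (lam.rTensor H (comul (R := k) x)) = lam x • 1)
    {x : H} (r : Coalgebra.Repr k x ι) (y : H) :
    ∑ i ∈ r.index, lam (r.left i) * lam (r.right i * y) = lam x * lam y := by
  have h := congr(lam ($((sum_repr_smul_eq_lid_rTensor_comul r lam).trans (hlam x)) * y))
  simpa [Finset.sum_mul, smul_mul_assoc, map_sum] using h

end RightIntegral

section Quasitriangular

variable {k H : Type*} [CommSemiring k] [Semiring H] [Bialgebra k H]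

lemma rid_lTensor_counit_eq_one (R Rinv : H ⊗[k] H) (hR2 : Rinv * R = 1)
    (hR13_12 : LinearMap.lTensor H (Coalgebra.comul (R := k) (A := H)) R =
      LinearMap.lTensor H (Algebra.TensorProduct.includeRight : H →ₐ[k] H ⊗[k] H).toLinearMap R *
      LinearMap.lTensor H (Algebra.TensorProduct.includeLeft : H →ₐ[k] H ⊗[k] H).toLinearMap R) :
    TensorProduct.rid k H (LinearMap.lTensor H (Coalgebra.counit (R := k)) R) = 1 := by
  set G : H ⊗[k] (H ⊗[k] H) →ₐ[k] H ⊗[k] H := Algebra.TensorProduct.map (AlgHom.id k H)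
    ((Algebra.TensorProduct.lid k H).toAlgHom.comp
      (Algebra.TensorProduct.map (Bialgebra.counitAlgHom k H) (AlgHom.id k H)))
  set V : H ⊗[k] H →ₗ[k] H :=
    (TensorProduct.rid k H).toLinearMap ∘ₗ LinearMap.lTensor H (Coalgebra.counit (R := k))
  have hG_comul : G.toLinearMap ∘ₗ LinearMap.lTensor H (Coalgebra.comul (R := k)) = .id := by
    ext x y
    simp [G, AlgebraTensorModule.map_eq, ← LinearMap.rTensor_def]
  have hG_right : G.toLinearMap ∘ₗ LinearMap.lTensor H
      (Algebra.TensorProduct.includeRight : H →ₐ[k] H ⊗[k] H).toLinearMap = .id := by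
    ext x y
    simp [G]
  have hG_left : G.toLinearMap ∘ₗ LinearMap.lTensor H
      (Algebra.TensorProduct.includeLeft : H →ₐ[k] H ⊗[k] H).toLinearMap =
      (TensorProduct.mk k H H).flip 1 ∘ₗ V := by
    ext x y
    simp [G, V]
  -- `id ⊗ ε ⊗ id` applied to `(id ⊗ Δ)R = R₁₃R₁₂`
  have hRV : R * (V R ⊗ₜ 1) = R := by
    have h := congr(G $hR13_12)
    have h1 := LinearMap.congr_fun hG_comul R
    have h2 := LinearMap.congr_fun hG_right R
    have h3 := LinearMap.congr_fun hG_left R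
    simp only [LinearMap.comp_apply, AlgHom.toLinearMap_apply, LinearMap.id_apply] at h1 h2 h3
    rw [map_mul, h1, h2, h3] at h
    exact h.symm
  have hVR1 : V R ⊗ₜ[k] (1 : H) = 1 := by
    rw [← one_mul (V R ⊗ₜ[k] (1 : H)), ← hR2, mul_assoc, hRV, hR2]
  simpa [V, Algebra.TensorProduct.one_def] using congr(V $hVR1)

end Quasitriangular

section LeftAction

variable {k H : Type*} [Field k] [Ring H] [HopfAlgebra k H]

lemma counit_actnu (ν : H →ₐ[k] k) (x : H) : counit (R := k) (actnu ν x) = ν x := by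
  have h : counit ∘ₗ (TensorProduct.lid k H).toLinearMap ∘ₗ ν.toLinearMap.rTensor H =
      ν.toLinearMap ∘ₗ (TensorProduct.rid k H).toLinearMap ∘ₗ counit.lTensor H := by
    ext a b
    simp [mul_comm]
  simpa [actnu, ← LinearMap.rTensor_def] using LinearMap.congr_fun h (comul x)

lemma actnu_counitAlgHom (x : H) : actnu (Bialgebra.counitAlgHom k H) x = x := by
  simp [actnu, ← LinearMap.rTensor_def]

lemma Tmap_counitAlgHom_one (R Rinv : H ⊗[k] H) (hR2 : Rinv * R = 1)
    (hR13_12 : LinearMap.lTensor H (Coalgebra.comul (R := k) (A := H)) R =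
      LinearMap.lTensor H (Algebra.TensorProduct.includeRight : H →ₐ[k] H ⊗[k] H).toLinearMap R *
      LinearMap.lTensor H (Algebra.TensorProduct.includeLeft : H →ₐ[k] H ⊗[k] H).toLinearMap R) :
    Tmap (Bialgebra.counitAlgHom k H) R 1 = 1 := by
  rw [Tmap, antipode_one, actnu_counitAlgHom, one_mul]
  exact rid_lTensor_counit_eq_one R Rinv hR2 hR13_12

end LeftAction

theorem stmt15_general {k H : Type*} [Field k] [Ring H] [HopfAlgebra k H]
    -- quasitriangular structure
    (R Rinv : H ⊗[k] H) (hR2 : Rinv * R = 1)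
    (hR13_12 : LinearMap.lTensor H (Coalgebra.comul (R := k) (A := H)) R =
      LinearMap.lTensor H (Algebra.TensorProduct.includeRight : H →ₐ[k] H ⊗[k] H).toLinearMap R *
      LinearMap.lTensor H (Algebra.TensorProduct.includeLeft : H →ₐ[k] H ⊗[k] H).toLinearMap R)
    -- integrals
    (lam : H →ₗ[k] k)
    (hlam : ∀ (x : H) (ιr : Type _) (r : Coalgebra.Repr k x ιr),
      ∑ i ∈ r.index, lam (r.left i) • r.right i = lam x • (1 : H))
    (ν : H →ₐ[k] k) :
    -- H is unimodular  ↔  1 ∈ I(H)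
    (∀ x : H, ν x = Coalgebra.counit (R := k) x) ↔
      ( -- 1 ∈ L(H)
        (∀ w : H, actnu ν w * 1 = 1 * w) ∧
        -- T(1) − 1 ∈ N(H)
        (∀ a : H, (∀ w : H, a * w = w * a) → lam ((Tmap ν R 1 - 1) * a) = 0) ∧
        -- the handle-slide condition, for every Σᵢ xᵢ ⊗ yᵢ ∈ V₂(H)
        (∀ (ι : Type) (s : Finset ι) (xv yv : ι → H),
          -- membership of Σᵢ xᵢ ⊗ yᵢ in V₂(H): invariance under the diagonal
          -- adjoint action (x ⊗ y) ◁ h = S(h₍₁₎)xh₍₂₎ ⊗ S(h₍₃₎)yh₍₄₎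
          (∀ (h : H) (ιr : Type _) (r : Coalgebra.Repr k h ιr)
              (κl : ιr → Type _) (rl : ∀ i, Coalgebra.Repr k (r.left i) (κl i))
              (κr : ιr → Type _) (rr : ∀ i, Coalgebra.Repr k (r.right i) (κr i)),
            ∑ i ∈ r.index, ∑ a ∈ (rl i).index, ∑ b ∈ (rr i).index, ∑ j ∈ s,
              (HopfAlgebra.antipode (R := k) ((rl i).left a) * xv j * (rl i).right a)
                ⊗ₜ[k] (HopfAlgebra.antipode (R := k) ((rr i).left b) * yv j * (rr i).right b)
              = Coalgebra.counit (R := k) h • ∑ j ∈ s, xv j ⊗ₜ[k] yv j) →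
          ∀ (κx : ι → Type _) (rx : ∀ j, Coalgebra.Repr k (xv j) (κx j)),
            ∑ j ∈ s, ∑ a ∈ (rx j).index, lam ((rx j).left a) * lam ((rx j).right a * yv j)
              = ∑ j ∈ s, lam (xv j) * lam (yv j)) ) := by
  constructor
  · intro hunimodular
    obtain rfl : ν = Bialgebra.counitAlgHom k H := AlgHom.ext hunimodular
    refine ⟨fun w => by rw [actnu_counitAlgHom, one_mul, mul_one], fun a _ => ?_, ?_⟩
    · rw [Tmap_counitAlgHom_one R Rinv hR2 hR13_12, sub_self, zero_mul, map_zero]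
    · intro ι s xv yv _ κx rx
      exact Finset.sum_congr rfl fun j _ =>
        sum_repr_lam_mul_lam lam (lid_rTensor_comul_of_forall_repr lam hlam) (rx j) (yv j)
  · rintro ⟨hL, -, -⟩ x
    rw [← counit_actnu ν x, ← mul_one (actnu ν x), hL, one_mul]

theorem stmt15 {k H : Type*} [Field k] [Ring H] [HopfAlgebra k H] [FiniteDimensional k H]
    -- quasitriangular structure
    (R Rinv : H ⊗[k] H) (hR1 : R * Rinv = 1) (hR2 : Rinv * R = 1)
    (hRcomm : ∀ x : H,
      R * Coalgebra.comul (R := k) x = (TensorProduct.comm k H H) (Coalgebra.comul (R := k) x) * R)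
    (hR13_12 : LinearMap.lTensor H (Coalgebra.comul (R := k) (A := H)) R =
      LinearMap.lTensor H (Algebra.TensorProduct.includeRight : H →ₐ[k] H ⊗[k] H).toLinearMap R *
      LinearMap.lTensor H (Algebra.TensorProduct.includeLeft : H →ₐ[k] H ⊗[k] H).toLinearMap R)
    (hR13_23 : LinearMap.rTensor H (Coalgebra.comul (R := k) (A := H)) R =
      LinearMap.rTensor H (Algebra.TensorProduct.includeLeft : H →ₐ[k] H ⊗[k] H).toLinearMap R *
      LinearMap.rTensor H (Algebra.TensorProduct.includeRight : H →ₐ[k] H ⊗[k] H).toLinearMap R)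
    -- ribbon structure
    (θ θinv : H) (hθ1 : θ * θinv = 1) (hθ2 : θinv * θ = 1)
    (hθc : ∀ x : H, θ * x = x * θ)
    (hθS : HopfAlgebra.antipode (R := k) θ = θ)
    (hθΔ : Coalgebra.comul (R := k) θ = (θ ⊗ₜ[k] θ) * ((TensorProduct.comm k H H) R * R))
    -- integrals
    (lam : H →ₗ[k] k)
    (hlam : ∀ (x : H) (ιr : Type _) (r : Coalgebra.Repr k x ιr),
      ∑ i ∈ r.index, lam (r.left i) • r.right i = lam x • (1 : H))
    (Λ : H) (hΛ0 : Λ ≠ 0)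
    (hΛ : ∀ x : H, x * Λ = Coalgebra.counit (R := k) x • Λ)
    (hpair : lam Λ = 1) (hpair' : lam (HopfAlgebra.antipode (R := k) Λ) = 1)
    (ν : H →ₐ[k] k) (hν : ∀ x : H, Λ * x = ν x • Λ) :
    -- H is unimodular  ↔  1 ∈ I(H)
    (∀ x : H, ν x = Coalgebra.counit (R := k) x) ↔
      ( -- 1 ∈ L(H)
        (∀ w : H, actnu ν w * 1 = 1 * w) ∧
        -- T(1) − 1 ∈ N(H)
        (∀ a : H, (∀ w : H, a * w = w * a) → lam ((Tmap ν R 1 - 1) * a) = 0) ∧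
        -- the handle-slide condition, for every Σᵢ xᵢ ⊗ yᵢ ∈ V₂(H)
        (∀ (ι : Type) (s : Finset ι) (xv yv : ι → H),
          -- membership of Σᵢ xᵢ ⊗ yᵢ in V₂(H): invariance under the diagonal
          -- adjoint action (x ⊗ y) ◁ h = S(h₍₁₎)xh₍₂₎ ⊗ S(h₍₃₎)yh₍₄₎
          (∀ (h : H) (ιr : Type _) (r : Coalgebra.Repr k h ιr)
              (κl : ιr → Type _) (rl : ∀ i, Coalgebra.Repr k (r.left i) (κl i))
              (κr : ιr → Type _) (rr : ∀ i, Coalgebra.Repr k (r.right i) (κr i)),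
            ∑ i ∈ r.index, ∑ a ∈ (rl i).index, ∑ b ∈ (rr i).index, ∑ j ∈ s,
              (HopfAlgebra.antipode (R := k) ((rl i).left a) * xv j * (rl i).right a)
                ⊗ₜ[k] (HopfAlgebra.antipode (R := k) ((rr i).left b) * yv j * (rr i).right b)
              = Coalgebra.counit (R := k) h • ∑ j ∈ s, xv j ⊗ₜ[k] yv j) →
          ∀ (κx : ι → Type _) (rx : ∀ j, Coalgebra.Repr k (xv j) (κx j)),
            ∑ j ∈ s, ∑ a ∈ (rx j).index, lam ((rx j).left a) * lam ((rx j).right a * yv j)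
              = ∑ j ∈ s, lam (xv j) * lam (yv j)) ) :=
  stmt15_general R Rinv hR2 hR13_12 lam hlam ν
end
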